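/- arXiv:2512.08677 — 3 statements merged into one kernel-verified Lean document; each statement's English description precedes it below -/
import Mathlib

section
/- If f : X → X is a homeomorphism of a compact metric space and the induced map 2^f on the hyperspace of nonempty compact subsets has the L-shadowing property, then f has the L-shadowing property. -/
open Topology Filter Metric TopologicalSpace

namespace LS

variable {X Y : Type*} [MetricSpace X] [MetricSpace Y]

/-- finite forward iterates of a homeomorphism -/
def hpowAux (f : X ≃ₜ X) : ℕ → X ≃ₜ X
  | 0 => Homeomorph.refl X
  | n+1 => (hpowAux f n).trans f

/-- `ℤ`-iterates of a homeomorphism: `hpow f k` is the `k`-th iterate `f^k`. -/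
def hpow (f : X ≃ₜ X) : ℤ → X ≃ₜ X
  | Int.ofNat n => hpowAux f n
  | Int.negSucc n => (hpowAux f (n+1)).symm

/-- the `ℤ`-iteration map of `f` -/
def F (f : X ≃ₜ X) : ℤ → X → X := fun k => hpow f k

/-- δ-limit-pseudo-orbit for a system given by its iterate family `T` -/
def IsLimitPseudoOrbit (T : ℤ → Y → Y) (δ : ℝ) (x : ℤ → Y) : Prop :=
  (∀ k : ℤ, dist (T 1 (x k)) (x (k+1)) ≤ δ) ∧
  Tendsto (fun k : ℤ => dist (T 1 (x k)) (x (k+1))) (cocompact ℤ) (𝓝 0)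

/-- `z` ε-limit-shadows the sequence `x` -/
def LimitShadows (T : ℤ → Y → Y) (ε : ℝ) (x : ℤ → Y) (z : Y) : Prop :=
  (∀ k : ℤ, dist (T k z) (x k) ≤ ε) ∧
  Tendsto (fun k : ℤ => dist (T k z) (x k)) (cocompact ℤ) (𝓝 0)

/-- the L-shadowing property -/
def LShadowing (T : ℤ → Y → Y) : Prop :=
  ∀ ε > (0:ℝ), ∃ δ > (0:ℝ), ∀ x : ℤ → Y, IsLimitPseudoOrbit T δ x → ∃ z, LimitShadows T ε x z

/-- the shadowing property -/
def Shadowing (T : ℤ → Y → Y) : Prop :=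
  ∀ ε > (0:ℝ), ∃ δ > (0:ℝ), ∀ x : ℤ → Y,
    (∀ k : ℤ, dist (T 1 (x k)) (x (k+1)) < δ) → ∃ z, ∀ k : ℤ, dist (T k z) (x k) < ε

/-- local c-stable set -/
def Ws (f : X ≃ₜ X) (c : ℝ) (x : X) : Set X :=
  {y | ∀ k : ℤ, 0 ≤ k → dist (F f k y) (F f k x) ≤ c}

/-- local c-unstable set -/
def Wu (f : X ≃ₜ X) (c : ℝ) (x : X) : Set X :=
  {y | ∀ k : ℤ, k ≤ 0 → dist (F f k y) (F f k x) ≤ c}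

/-- stable set -/
def WsA (f : X ≃ₜ X) (x : X) : Set X :=
  {y | Tendsto (fun k : ℤ => dist (F f k y) (F f k x)) atTop (𝓝 0)}

/-- unstable set -/
def WuA (f : X ≃ₜ X) (x : X) : Set X :=
  {y | Tendsto (fun k : ℤ => dist (F f k y) (F f k x)) atBot (𝓝 0)}

/-- asymptotic local stable set -/
def Vs (f : X ≃ₜ X) (c : ℝ) (x : X) : Set X := WsA f x ∩ Ws f c x

/-- asymptotic local unstable set -/
def Vu (f : X ≃ₜ X) (c : ℝ) (x : X) : Set X := WuA f x ∩ Wu f c x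

/-- image of a nonempty compact set under a homeomorphism -/
def himg (f : X ≃ₜ X) (A : NonemptyCompacts X) : NonemptyCompacts X :=
  ⟨⟨f '' A, A.isCompact.image f.continuous⟩, A.nonempty.image f⟩

/-- the `ℤ`-iteration family of the induced hyperspace map `2^f` -/
def HF (f : X ≃ₜ X) : ℤ → NonemptyCompacts X → NonemptyCompacts X :=
  fun k A => himg (hpow f k) A

end LS

/-!
Singletons embed `X` isometrically and `f`-equivariantly into the hyperspace, so a limit
pseudo-orbit of `f` is one of `2^f`. If a compact set `Z` limit-shadows it, any `z ∈ Z` does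
too: `d(f^k z, x_k) ≤ d_H(f^k Z, {x_k})`.
-/

namespace LS

variable {X : Type*} [MetricSpace X]

theorem dist_le_dist_singleton_of_mem {A : NonemptyCompacts X} {z : X} (hz : z ∈ A) (p : X) :
    dist z p ≤ dist A {p} := by
  simpa only [NonemptyCompacts.dist_eq, NonemptyCompacts.coe_singleton, infDist_singleton] using
    infDist_le_hausdorffDist_of_mem hz (edist_ne_top A {p})

theorem HF_singleton (f : X ≃ₜ X) (k : ℤ) (x : X) : HF f k {x} = {F f k x} :=
  NonemptyCompacts.ext Set.image_singleton

theorem dist_HF_singleton (f : X ≃ₜ X) (k : ℤ) (x y : X) :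
    dist (HF f k {x}) {y} = dist (F f k x) y := by
  rw [HF_singleton, NonemptyCompacts.isometry_singleton.dist_eq]

theorem IsLimitPseudoOrbit.singleton {f : X ≃ₜ X} {δ : ℝ} {x : ℤ → X}
    (hx : IsLimitPseudoOrbit (F f) δ x) :
    IsLimitPseudoOrbit (HF f) δ (fun k => {x k}) := by
  simp only [IsLimitPseudoOrbit, dist_HF_singleton]
  exact hx

theorem LimitShadows.of_mem {f : X ≃ₜ X} {ε : ℝ} {x : ℤ → X} {Z : NonemptyCompacts X} {z : X}
    (hZ : LimitShadows (HF f) ε (fun k => {x k}) Z) (hz : z ∈ Z) :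
    LimitShadows (F f) ε x z := by
  have hle (k : ℤ) : dist (F f k z) (x k) ≤ dist (HF f k Z) {x k} :=
    dist_le_dist_singleton_of_mem (Set.mem_image_of_mem (hpow f k) hz) (x k)
  exact ⟨fun k => (hle k).trans (hZ.1 k), squeeze_zero (fun _ => dist_nonneg) hle hZ.2⟩

end LS

theorem stmt_0_general {X : Type*} [MetricSpace X] (f : X ≃ₜ X)
    (h : LS.LShadowing (LS.HF f)) : LS.LShadowing (LS.F f) := by
  intro ε hε
  obtain ⟨δ, hδ, hshadow⟩ := h ε hε
  refine ⟨δ, hδ, fun x hx => ?_⟩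
  obtain ⟨Z, hZ⟩ := hshadow _ hx.singleton
  obtain ⟨z, hz⟩ := Z.nonempty
  exact ⟨z, hZ.of_mem hz⟩

/-- if the induced hyperspace map `2^f` has the L-shadowing property,
then `f` has the L-shadowing property. -/
theorem stmt_0 {X : Type*} [MetricSpace X] [CompactSpace X] (f : X ≃ₜ X)
    (h : LS.LShadowing (LS.HF f)) : LS.LShadowing (LS.F f) :=
  stmt_0_general f h
end

section
/- If f : X → X is a homeomorphism of a compact metric space with the L-shadowing property, then the induced map 2^f on the hyperspace of nonempty compact subsets (with the Hausdorff metric) has the L-shadowing property. -/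
open Topology Filter Metric TopologicalSpace

/-!
Given a limit pseudo-orbit `(A j)` of `2^f`, the sequences `x` with `x j ∈ A j` and
`d(f(x j), x (j+1)) ≤ d_H(f(A j), A (j+1))` form a compact family `P` of limit pseudo-orbits of
`f`, and every point of every `A k` lies on one of them. If some envelope `g → 0` bounds the
shadowing error of all `x ∈ P` at once, then the points whose orbit stays within `g j` of `A j`
for all `j` form a compact set `B` with `d_H(f^j(B), A j) ≤ g j`.

Such a uniform envelope exists on any compact family of limit pseudo-orbits. Near a reference
`q ∈ P`, replace the central window of `x ∈ P` by the orbit of a shadow of `q`; a shadow of this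
patched limit pseudo-orbit is close to `x` beyond a threshold that depends only on `q`, and
finitely many `q` cover `P`. Repeating this with tolerances `ε / 2 ^ n` and intersecting the
nested compact sets of shadows produces `g`.
-/

theorem Int.hasBasis_cocompact_natAbs :
    (cocompact ℤ).HasBasis (fun _ : ℕ => True) (fun N => {j : ℤ | N ≤ j.natAbs}) := by
  have : cocompact ℤ = comap Int.natAbs atTop := by
    rw [cocompact_eq_atBot_atTop, ← comap_abs_atTop, ← Nat.comap_cast_atTop (R := ℤ),
      comap_comap]
    congr 1
    ext j
    simp
  rw [this]
  exact atTop_basis.comap _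

theorem exists_nat_seq_of_step {α : Type*} {t : ℕ → Set α} {Q : ℕ → α → α → Prop}
    (hstep : ∀ n, ∀ p ∈ t n, ∃ q ∈ t (n + 1), Q n p q) {a : α} (ha : a ∈ t 0) :
    ∃ u : ℕ → α, u 0 = a ∧ ∀ n, u n ∈ t n ∧ Q n (u n) (u (n + 1)) := by
  have hstep' : ∀ n p, ∃ q, p ∈ t n → q ∈ t (n + 1) ∧ Q n p q := fun n p => by
    by_cases hp : p ∈ t n
    · obtain ⟨q, hq⟩ := hstep n p hp
      exact ⟨q, fun _ => hq⟩
    · exact ⟨p, fun h => absurd h hp⟩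
  choose next hnext using hstep'
  let u : ℕ → α := fun n => Nat.rec a next n
  have hu : ∀ n, u n ∈ t n := fun n => Nat.rec ha (fun n ih => (hnext n (u n) ih).1) n
  exact ⟨u, rfl, fun n => ⟨hu n, (hnext n (u n) (hu n)).2⟩⟩

theorem exists_int_seq_through_of_step {α : Type*} {s : ℤ → Set α} {R : ℤ → α → α → Prop}
    (hfwd : ∀ j, ∀ p ∈ s j, ∃ q ∈ s (j + 1), R j p q)
    (hbwd : ∀ j, ∀ q ∈ s (j + 1), ∃ p ∈ s j, R j p q) {k : ℤ} {a : α} (ha : a ∈ s k) :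
    ∃ x : ℤ → α, x k = a ∧ ∀ j, x j ∈ s j ∧ R j (x j) (x (j + 1)) := by
  obtain ⟨u, hu0, hu⟩ := exists_nat_seq_of_step (t := fun n => s (k + n))
    (Q := fun n p q => R (k + n) p q) (fun n p hp => by simpa [add_assoc] using hfwd _ p hp)
    (by simpa using ha)
  obtain ⟨v, hv0, hv⟩ := exists_nat_seq_of_step (t := fun n => s (k - n))
    (Q := fun n q p => R (k - n - 1) p q)
    (fun n q hq => by
      obtain ⟨p, hp, hpq⟩ := hbwd (k - n - 1) q (by simpa using hq)
      exact ⟨p, by simpa [sub_sub] using hp, hpq⟩)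
    (by simpa using ha)
  let x : ℤ → α := fun j => if k ≤ j then u (j - k).toNat else v (k - j).toNat
  have hxu : ∀ j, k ≤ j → x j = u (j - k).toNat := fun j hj => if_pos hj
  have hxv : ∀ j, j ≤ k → x j = v (k - j).toNat := fun j hj => by
    rcases hj.lt_or_eq with hj | rfl
    · exact if_neg (not_le.2 hj)
    · simp [x, hu0, hv0]
  have hmem : ∀ j, x j ∈ s j := fun j => by
    rcases le_or_gt k j with hj | hj
    · have h : u (j - k).toNat ∈ s (k + (j - k).toNat) := (hu _).1
      rw [hxu j hj]; rwa [show k + ((j - k).toNat : ℤ) = j by omega] at h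
    · have h : v (k - j).toNat ∈ s (k - (k - j).toNat) := (hv _).1
      rw [hxv j hj.le]; rwa [show k - ((k - j).toNat : ℤ) = j by omega] at h
  refine ⟨x, by simp [hxu k le_rfl, hu0], fun j => ⟨hmem j, ?_⟩⟩
  rcases le_or_gt k j with hj | hj
  · have h : R (k + (j - k).toNat) (u (j - k).toNat) (u ((j - k).toNat + 1)) := (hu _).2
    rw [hxu j hj, hxu (j + 1) (by omega), show (j + 1 - k).toNat = (j - k).toNat + 1 by omega]
    rwa [show k + ((j - k).toNat : ℤ) = j by omega] at h
  · have h : R (k - (k - (j + 1)).toNat - 1) (v ((k - (j + 1)).toNat + 1))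
        (v (k - (j + 1)).toNat) := (hv _).2
    rw [hxv j hj.le, hxv (j + 1) hj, show (k - j).toNat = (k - (j + 1)).toNat + 1 by omega]
    rwa [show k - ((k - (j + 1)).toNat : ℤ) - 1 = j by omega] at h

theorem TopologicalSpace.NonemptyCompacts.exists_dist_le_dist {X : Type*} [MetricSpace X]
    {A B : NonemptyCompacts X} {x : X} (hx : x ∈ A) : ∃ y ∈ B, dist x y ≤ dist A B := by
  obtain ⟨y, hy, hxy⟩ := B.isCompact.exists_infDist_eq_dist B.nonempty x
  refine ⟨y, hy, hxy ▸ ?_⟩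
  rw [NonemptyCompacts.dist_eq]
  exact infDist_le_hausdorffDist_of_mem hx (hausdorffEDist_ne_top_of_nonempty_of_bounded
    A.nonempty B.nonempty A.isCompact.isBounded B.isCompact.isBounded)

namespace LS

section Iterates

variable {X : Type*} [MetricSpace X] (f : X ≃ₜ X)

theorem hpowAux_eq_pow (n : ℕ) : hpowAux f n = f ^ n := by
  induction n with
  | zero => rfl
  | succ n ih => rw [pow_succ', ← ih]; rfl

theorem F_eq_zpow (k : ℤ) : F f k = ⇑(f ^ k) := by
  cases k with
  | ofNat n => exact congrArg _ ((hpowAux_eq_pow f n).trans (zpow_natCast f n).symm)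
  | negSucc n =>
    show ⇑(hpowAux f (n + 1)).symm = _
    rw [hpowAux_eq_pow, zpow_negSucc]; rfl

@[simp] theorem F_one_apply (x : X) : F f 1 x = f x := rfl

theorem F_add_apply (j k : ℤ) (x : X) : F f (j + k) x = F f j (F f k x) := by
  simp only [F_eq_zpow, zpow_add, Homeomorph.mul_apply]

theorem F_add_one_apply (k : ℤ) (x : X) : F f (k + 1) x = f (F f k x) := by
  rw [add_comm, F_add_apply, F_one_apply]

theorem continuous_F (k : ℤ) : Continuous (F f k) := (hpow f k).continuous

end Iterates

section UniformShadowing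

variable {X : Type*} [MetricSpace X]

def patchOrbit (f : X ≃ₜ X) (x : ℤ → X) (w : X) (M : ℕ) : ℤ → X :=
  fun j => if j.natAbs ≤ M then F f j w else x j

def LimitShadowsWithin (f : X ≃ₜ X) (b : ℤ → ℝ) (x : ℤ → X) (z : X) : Prop :=
  (∀ j, dist (F f j z) (x j) ≤ b j) ∧
    Tendsto (fun j => dist (F f j z) (x j)) (cocompact ℤ) (𝓝 0)

variable {f : X ≃ₜ X} {x : ℤ → X} {w : X} {M : ℕ}

theorem patchOrbit_of_le {j : ℤ} (hj : j.natAbs ≤ M) : patchOrbit f x w M j = F f j w :=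
  if_pos hj

theorem patchOrbit_of_lt {j : ℤ} (hj : M < j.natAbs) : patchOrbit f x w M j = x j :=
  if_neg (not_le.2 hj)

theorem isLimitPseudoOrbit_patchOrbit {c₁ c₂ : ℝ}
    (hx : ∀ j : ℤ, M ≤ j.natAbs → dist (f (x j)) (x (j + 1)) ≤ c₁)
    (hw : ∀ j : ℤ, M ≤ j.natAbs → j.natAbs ≤ M + 1 → dist (F f j w) (x j) ≤ c₂)
    (hlim : Tendsto (fun j => dist (f (x j)) (x (j + 1))) (cocompact ℤ) (𝓝 0)) :
    IsLimitPseudoOrbit (F f) (c₁ + c₂) (patchOrbit f x w M) := by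
  have hc₁ : 0 ≤ c₁ := dist_nonneg.trans (hx M (by simp))
  have hc₂ : 0 ≤ c₂ := dist_nonneg.trans (hw M (by simp) (by simp))
  refine ⟨fun j => ?_, hlim.congr' ?_⟩
  · rw [F_one_apply]
    by_cases hj : j.natAbs ≤ M <;> by_cases hj' : (j + 1).natAbs ≤ M
    · rw [patchOrbit_of_le hj, patchOrbit_of_le hj', ← F_add_one_apply, dist_self]
      positivity
    · rw [patchOrbit_of_le hj, patchOrbit_of_lt (not_le.1 hj'), ← F_add_one_apply]
      linarith [hw (j + 1) (by omega) (by omega)]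
    · rw [patchOrbit_of_lt (not_le.1 hj), patchOrbit_of_le hj']
      linarith [dist_triangle (f (x j)) (x (j + 1)) (F f (j + 1) w), hx j (by omega),
        dist_comm (x (j + 1)) (F f (j + 1) w), hw (j + 1) (by omega) (by omega)]
    · rw [patchOrbit_of_lt (not_le.1 hj), patchOrbit_of_lt (not_le.1 hj')]
      linarith [hx j (by omega)]
  · filter_upwards [Int.hasBasis_cocompact_natAbs.mem_of_mem (i := M + 2) trivial] with j hj
    rw [F_one_apply, patchOrbit_of_lt (by omega), patchOrbit_of_lt (by omega)]

theorem exists_limitShadowsWithin_of_near {δ γ σ : ℝ} (hσ : σ ≤ δ / 3)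
    (hshadow : ∀ y, IsLimitPseudoOrbit (F f) δ y → ∃ z, LimitShadows (F f) γ y z)
    {e b : ℤ → ℝ} (he : Tendsto e (cocompact ℤ) (𝓝 0))
    (hxe : ∀ j, dist (f (x j)) (x (j + 1)) ≤ e j) {q : ℤ → X}
    (hq : LimitShadowsWithin f b q w)
    (htail : ∀ j : ℤ, M ≤ j.natAbs → e j ≤ δ / 3 ∧ dist (F f j w) (q j) ≤ δ / 3)
    (hxq : ∀ j : ℤ, j.natAbs ≤ M + 1 → dist (x j) (q j) ≤ σ) :
    ∃ z, LimitShadowsWithin f (fun j => if M < j.natAbs then γ else γ + b j + σ) x z := by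
  have hwx : ∀ j : ℤ, j.natAbs ≤ M + 1 → dist (F f j w) (x j) ≤ dist (F f j w) (q j) + σ :=
    fun j hj => (dist_triangle_right _ _ (q j)).trans (add_le_add_right (hxq j hj) _)
  have hpatch : IsLimitPseudoOrbit (F f) δ (patchOrbit f x w M) := by
    have := isLimitPseudoOrbit_patchOrbit (w := w) (c₁ := δ / 3) (c₂ := 2 * δ / 3)
      (fun j hj => (hxe j).trans (htail j hj).1)
      (fun j hj hj' => by linarith [hwx j hj', (htail j hj).2])
      (squeeze_zero (fun _ => dist_nonneg) hxe he)
    rwa [show δ / 3 + 2 * δ / 3 = δ by ring] at this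
  obtain ⟨z, hz, hzlim⟩ := hshadow _ hpatch
  refine ⟨z, fun j => ?_, hzlim.congr' ?_⟩
  · have hzj := hz j
    dsimp only
    split_ifs with hj
    · rwa [patchOrbit_of_lt hj] at hzj
    · rw [patchOrbit_of_le (not_lt.1 hj)] at hzj
      linarith [dist_triangle (F f j z) (F f j w) (x j), hwx j (by omega), hq.1 j]
  · filter_upwards [Int.hasBasis_cocompact_natAbs.mem_of_mem (i := M + 1) trivial]
      with j (hj : _ ≤ j.natAbs)
    rw [patchOrbit_of_lt (by omega)]

theorem exists_limitShadowsWithin_refine (hL : LShadowing (F f)) {P : Set (ℤ → X)}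
    (hP : IsCompact P) {e : ℤ → ℝ} (he : Tendsto e (cocompact ℤ) (𝓝 0))
    (hPe : ∀ x ∈ P, ∀ j, dist (f (x j)) (x (j + 1)) ≤ e j) {b : ℤ → ℝ}
    (hb : ∀ x ∈ P, ∃ z, LimitShadowsWithin f b x z) {η : ℝ} (hη : 0 < η) :
    ∃ N : ℕ, ∀ x ∈ P, ∃ z,
      LimitShadowsWithin f (fun j => if N ≤ j.natAbs then η else b j + η) x z := by
  obtain ⟨δ, hδ, hshadow⟩ := hL (η / 2) (by positivity)
  set σ := min (η / 2) (δ / 3)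
  choose z hz using hb
  have htail : ∀ q (hq : q ∈ P), ∃ M : ℕ, ∀ j : ℤ, M ≤ j.natAbs →
      e j ≤ δ / 3 ∧ dist (F f j (z q hq)) (q j) ≤ δ / 3 := by
    intro q hq
    have hev := (he.eventually (ge_mem_nhds (by positivity : (0 : ℝ) < δ / 3))).and
      ((hz q hq).2.eventually (ge_mem_nhds (by positivity : (0 : ℝ) < δ / 3)))
    simpa using Int.hasBasis_cocompact_natAbs.eventually_iff.1 hev
  choose M hM using htail
  let U : ∀ q ∈ P, Set (ℤ → X) := fun q hq =>
    {y | ∀ j : ℤ, j.natAbs ≤ M q hq + 1 → dist (y j) (q j) < σ}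
  have hU : ∀ q (hq : q ∈ P), U q hq ∈ 𝓝 q := by
    intro q hq
    have hfin : {j : ℤ | j.natAbs ≤ M q hq + 1}.Finite :=
      (Set.finite_Icc (-(M q hq + 1 : ℤ)) (M q hq + 1)).subset
        fun j (hj : j.natAbs ≤ _) => Set.mem_Icc.2 ⟨by omega, by omega⟩
    refine (eventually_all_finite hfin).2 fun j _ => ?_
    exact (continuous_apply j).continuousAt.eventually (ball_mem_nhds (q j) (by positivity))
  obtain ⟨t, hcover⟩ := hP.elim_nhds_subcover' U hU
  refine ⟨t.sup (fun q => M q q.2) + 1, fun x hx => ?_⟩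
  obtain ⟨⟨q, hq⟩, hqt, hxq⟩ := Set.mem_iUnion₂.1 (hcover hx)
  have hMN : M q hq ≤ t.sup (fun q => M q q.2) := Finset.le_sup (f := fun q : P => M q q.2) hqt
  obtain ⟨w, hw, hwlim⟩ := exists_limitShadowsWithin_of_near (min_le_right _ _) hshadow he
    (hPe x hx) (hz q hq) (hM q hq) fun j hj => (hxq j hj).le
  refine ⟨w, fun j => ?_, hwlim⟩
  have hb0 : 0 ≤ b j := dist_nonneg.trans ((hz q hq).1 j)
  have hση : σ ≤ η / 2 := min_le_left _ _
  have hwj := hw j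
  dsimp only at hwj ⊢
  split_ifs at hwj ⊢ <;> first | omega | linarith

noncomputable def refinedBound (ε : ℝ) (N : ℕ → (ℤ → ℝ) → ℕ) : ℕ → ℤ → ℝ
  | 0, _ => ε / 4
  | n + 1, j => if N n (refinedBound ε N n) ≤ j.natAbs then ε / 2 ^ (n + 3)
      else refinedBound ε N n j + ε / 2 ^ (n + 3)

-- The slack `ε / 2 ^ (n + 2)` is what the later refinements, adding `ε / 2 ^ (k + 3)` each, eat.
theorem refinedBound_le {ε : ℝ} (hε : 0 < ε) (N : ℕ → (ℤ → ℝ) → ℕ) (n : ℕ) (j : ℤ) :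
    refinedBound ε N n j ≤ ε / 2 - ε / 2 ^ (n + 2) ∧
      ∀ m < n, N m (refinedBound ε N m) ≤ j.natAbs →
        refinedBound ε N n j ≤ ε / 2 ^ (m + 1) - ε / 2 ^ (n + 2) := by
  induction n with
  | zero =>
    refine ⟨?_, fun m hm => absurd hm (Nat.not_lt_zero m)⟩
    show ε / 4 ≤ _
    linarith
  | succ n ih =>
    have ht : 0 < ε / 2 ^ (n + 3) := by positivity
    have hlev : ∀ m ≤ n, 4 * (ε / 2 ^ (n + 3)) ≤ ε / 2 ^ (m + 1) := fun m hm => by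
      rw [show 4 * (ε / 2 ^ (n + 3)) = ε / 2 ^ (n + 1) by ring]
      gcongr
      norm_num
    have h0 := hlev 0 (Nat.zero_le n)
    rw [zero_add, pow_one] at h0
    have hslack : ε / 2 ^ (n + 2) = 2 * (ε / 2 ^ (n + 3)) := by ring
    rw [show n + 1 + 2 = n + 3 by ring, refinedBound]
    refine ⟨by split_ifs <;> linarith [ih.1], fun m hm hNm => ?_⟩
    rcases Nat.lt_succ_iff_lt_or_eq.1 hm with hm | rfl
    · have := hlev m hm.le
      split_ifs <;> linarith [ih.2 m hm hNm]
    · rw [if_pos hNm]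
      linarith [hlev m le_rfl]

theorem exists_tail_thresholds (hL : LShadowing (F f)) {P : Set (ℤ → X)} (hP : IsCompact P)
    {e : ℤ → ℝ} (he : Tendsto e (cocompact ℤ) (𝓝 0))
    (hPe : ∀ x ∈ P, ∀ j, dist (f (x j)) (x (j + 1)) ≤ e j) {ε : ℝ} (hε : 0 < ε)
    (h0 : ∀ x ∈ P, ∃ z, LimitShadowsWithin f (fun _ => ε / 4) x z) :
    ∃ N : ℕ → ℕ, ∀ n, ∀ x ∈ P, ∃ z, ∀ j, ∀ m < n,
      dist (F f j z) (x j) ≤ if N m ≤ j.natAbs then ε / 2 ^ (m + 1) else ε / 2 := by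
  have step : ∀ (n : ℕ) (b : ℤ → ℝ), ∃ N : ℕ, (∀ x ∈ P, ∃ z, LimitShadowsWithin f b x z) →
      ∀ x ∈ P, ∃ z, LimitShadowsWithin f
        (fun j => if N ≤ j.natAbs then ε / 2 ^ (n + 3) else b j + ε / 2 ^ (n + 3)) x z := by
    intro n b
    by_cases hb : ∀ x ∈ P, ∃ z, LimitShadowsWithin f b x z
    · obtain ⟨N, hN⟩ := exists_limitShadowsWithin_refine hL hP he hPe hb
        (by positivity : (0 : ℝ) < ε / 2 ^ (n + 3))
      exact ⟨N, fun _ => hN⟩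
    · exact ⟨0, fun h => absurd h hb⟩
  choose N hN using step
  have hb : ∀ n, ∀ x ∈ P, ∃ z, LimitShadowsWithin f (refinedBound ε N n) x z := fun n =>
    Nat.rec h0 (fun n ih => hN n _ ih) n
  refine ⟨fun n => N n (refinedBound ε N n), fun n x hx => ?_⟩
  obtain ⟨z, hz, -⟩ := hb n x hx
  refine ⟨z, fun j m hm => ?_⟩
  have hpos : 0 < ε / 2 ^ (n + 2) := by positivity
  have hbound := refinedBound_le hε N n j
  split_ifs with hNm
  · linarith [hz j, hbound.2 m hm hNm]
  · linarith [hz j, hbound.1]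

theorem exists_uniform_limitShadowing [CompactSpace X] (hL : LShadowing (F f)) {ε : ℝ}
    (hε : 0 < ε) : ∃ δ > 0, ∀ {P : Set (ℤ → X)} {e : ℤ → ℝ}, IsCompact P →
      Tendsto e (cocompact ℤ) (𝓝 0) → (∀ j, e j ≤ δ) →
      (∀ x ∈ P, ∀ j, dist (f (x j)) (x (j + 1)) ≤ e j) →
      ∃ g : ℤ → ℝ, Tendsto g (cocompact ℤ) (𝓝 0) ∧ (∀ j, g j ≤ ε) ∧
        ∀ x ∈ P, ∃ z, ∀ j, dist (F f j z) (x j) ≤ g j := by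
  obtain ⟨δ, hδ, hshadow⟩ := hL (ε / 4) (by positivity)
  refine ⟨δ, hδ, fun {P e} hP he heδ hPe => ?_⟩
  obtain ⟨N, hN⟩ := exists_tail_thresholds hL hP he hPe hε fun x hx =>
    hshadow x ⟨fun j => (hPe x hx j).trans (heδ j),
      squeeze_zero (fun _ => dist_nonneg) (hPe x hx) he⟩
  let bound : ℤ → ℕ → ℝ := fun j m => if N m ≤ j.natAbs then ε / 2 ^ (m + 1) else ε / 2
  have hbound0 : ∀ j m, 0 ≤ bound j m := fun j m => by
    simp only [bound]; split_ifs <;> positivity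
  have hbdd : ∀ j, BddBelow (Set.range (bound j)) := fun j =>
    ⟨0, by rintro _ ⟨m, rfl⟩; exact hbound0 j m⟩
  refine ⟨fun j => ⨅ m, bound j m, ?_, fun j => ?_, fun x hx => ?_⟩
  · have hsmall : Tendsto (fun m : ℕ => ε / 2 ^ (m + 1)) atTop (𝓝 0) :=
      tendsto_const_nhds.div_atTop
        ((tendsto_pow_atTop_atTop_of_one_lt one_lt_two).comp (tendsto_add_atTop_nat 1))
    refine tendsto_order.2 ⟨fun a ha => Eventually.of_forall fun j =>
      ha.trans_le (le_ciInf (hbound0 j)), fun a ha => ?_⟩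
    obtain ⟨m, hm⟩ := (hsmall.eventually (gt_mem_nhds ha)).exists
    filter_upwards [Int.hasBasis_cocompact_natAbs.mem_of_mem (i := N m) trivial] with j hj
    exact (ciInf_le (hbdd j) m).trans_lt (by simpa [bound, if_pos hj] using hm)
  · refine (ciInf_le (hbdd j) 0).trans ?_
    simp only [bound]
    split_ifs <;> norm_num <;> linarith
  · let K : ℕ → Set X := fun n => {z | ∀ j, ∀ m < n, dist (F f j z) (x j) ≤ bound j m}
    have hK : ∀ n, IsClosed (K n) := fun n => by
      simp only [K, Set.ofPred_forall]
      exact isClosed_iInter fun j => isClosed_iInter fun m => isClosed_iInter fun _ =>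
        isClosed_le ((continuous_F f j).dist continuous_const) continuous_const
    obtain ⟨z, hz⟩ := IsCompact.nonempty_iInter_of_sequence_nonempty_isCompact_isClosed K
      (fun n z hz j m hm => hz j m (by omega)) (fun n => hN n x hx) (hK 0).isCompact hK
    exact ⟨z, fun j => le_ciInf fun m => Set.mem_iInter.1 hz (m + 1) j m (by omega)⟩
end UniformShadowing

section Hyperspace

variable {X : Type*} [MetricSpace X] (f : X ≃ₜ X)

theorem coe_HF (k : ℤ) (A : NonemptyCompacts X) : (HF f k A : Set X) = F f k '' A := rfl

theorem exists_pseudoOrbit_through (A : ℤ → NonemptyCompacts X) {k : ℤ} {a : X}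
    (ha : a ∈ A k) : ∃ x : ℤ → X, x k = a ∧
      ∀ j, x j ∈ A j ∧ dist (f (x j)) (x (j + 1)) ≤ dist (HF f 1 (A j)) (A (j + 1)) := by
  refine exists_int_seq_through_of_step (s := fun j => (A j : Set X))
    (R := fun j p q => dist (f p) q ≤ dist (HF f 1 (A j)) (A (j + 1))) (fun j p hp => ?_)
    (fun j q hq => ?_) ha
  · exact (HF f 1 (A j)).exists_dist_le_dist (B := A (j + 1)) ⟨p, hp, rfl⟩
  · obtain ⟨_, ⟨p, hp, rfl⟩, hqp⟩ := (A (j + 1)).exists_dist_le_dist (B := HF f 1 (A j)) hq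
    exact ⟨p, hp, by rw [dist_comm, dist_comm (HF f 1 (A j))]; exact hqp⟩

theorem exists_nonemptyCompacts_dist_le [CompactSpace X] {A : ℤ → NonemptyCompacts X}
    {g : ℤ → ℝ} (hg : ∀ k, ∀ a ∈ A k, ∃ z, dist (F f k z) a ≤ g k ∧
      ∀ j, infDist (F f j z) (A j) ≤ g j) :
    ∃ B : NonemptyCompacts X, ∀ k, dist (HF f k B) (A k) ≤ g k := by
  let B : Set X := {z | ∀ j, infDist (F f j z) (A j) ≤ g j}
  have hB : IsClosed B := by
    simp only [B, Set.ofPred_forall]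
    exact isClosed_iInter fun j =>
      isClosed_le ((continuous_infDist_pt _).comp (continuous_F f j)) continuous_const
  obtain ⟨a, ha⟩ := (A 0).nonempty
  obtain ⟨z, -, hz⟩ := hg 0 a ha
  refine ⟨⟨⟨B, hB.isCompact⟩, ⟨z, hz⟩⟩, fun k => ?_⟩
  have hgk : 0 ≤ g k := by
    obtain ⟨a, ha⟩ := (A k).nonempty
    obtain ⟨z, hza, -⟩ := hg k a ha
    exact dist_nonneg.trans hza
  rw [NonemptyCompacts.dist_eq, coe_HF]
  refine hausdorffDist_le_of_infDist hgk ?_ fun a ha => ?_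
  · rintro _ ⟨y, hy, rfl⟩
    exact hy k
  · obtain ⟨z, hza, hz⟩ := hg k a ha
    exact (infDist_le_dist_of_mem (Set.mem_image_of_mem _ (show z ∈ B from hz))).trans
      (dist_comm a _ ▸ hza)

end Hyperspace

end LS

/-- if `f` has the L-shadowing property, then the induced hyperspace
map `2^f` has the L-shadowing property. -/
theorem stmt_1 {X : Type*} [MetricSpace X] [CompactSpace X] (f : X ≃ₜ X)
    (h : LS.LShadowing (LS.F f)) : LS.LShadowing (LS.HF f) := by
  intro ε hε
  obtain ⟨δ, hδ, huniform⟩ := LS.exists_uniform_limitShadowing h hε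
  refine ⟨δ, hδ, fun A hA => ?_⟩
  let P : Set (ℤ → X) := {x | ∀ j, x j ∈ A j ∧
    dist (f (x j)) (x (j + 1)) ≤ dist (LS.HF f 1 (A j)) (A (j + 1))}
  have hP : IsClosed P := by
    simp only [P, Set.ofPred_forall, Set.ofPred_and]
    exact isClosed_iInter fun j => ((A j).isCompact.isClosed.preimage (continuous_apply j)).inter
      (isClosed_le ((f.continuous.comp (continuous_apply j)).dist (continuous_apply _))
        continuous_const)
  obtain ⟨g, hg, hgε, hgP⟩ := huniform hP.isCompact hA.2 hA.1 fun x hx j => (hx j).2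
  obtain ⟨B, hB⟩ := LS.exists_nonemptyCompacts_dist_le f fun k a ha => by
    obtain ⟨x, rfl, hx⟩ := LS.exists_pseudoOrbit_through f A ha
    obtain ⟨z, hz⟩ := hgP x hx
    exact ⟨z, hz k, fun j => (infDist_le_dist_of_mem (hx j).1).trans (hz j)⟩
  exact ⟨B, fun k => (hB k).trans (hgε k), squeeze_zero (fun _ => dist_nonneg) hB hg⟩
end

section
/- If f : X → X is an expansive homeomorphism of a compact metric space, then f has uniform contractions on its local stable and unstable sets: there exists ε > 0 such that for each r > 0 there exists k_r ∈ ℕ with f^n(W^s_ε(x)) ⊆ W^s_r(f^n(x)) and f^{−n}(W^u_ε(x)) ⊆ W^u_r(f^{−n}(x)) for every x ∈ X and every n ≥ k_r. -/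
open Topology Filter Metric TopologicalSpace

namespace LS

variable {X Y : Type*} [MetricSpace X] [MetricSpace Y]

lemma hpowAux_toEquiv (f : X ≃ₜ X) : ∀ n : ℕ, (hpowAux f n).toEquiv = (f.toEquiv : Equiv.Perm X) ^ n
  | 0 => rfl
  | n+1 => by
      show (hpowAux f n).toEquiv.trans f.toEquiv = _
      rw [← Equiv.Perm.mul_def, hpowAux_toEquiv f n, ← pow_succ']

lemma hpow_toEquiv (f : X ≃ₜ X) : ∀ k : ℤ, (hpow f k).toEquiv = (f.toEquiv : Equiv.Perm X) ^ k
  | Int.ofNat n => by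
      show (hpowAux f n).toEquiv = _
      rw [hpowAux_toEquiv]
      norm_num [Int.ofNat_eq_natCast, zpow_natCast]
  | Int.negSucc n => by
      show (hpowAux f (n+1)).symm.toEquiv = _
      rw [zpow_negSucc, ← hpowAux_toEquiv, Equiv.Perm.inv_def]
      rfl

lemma F_apply (f : X ≃ₜ X) (k : ℤ) (x : X) : F f k x = ((f.toEquiv : Equiv.Perm X) ^ k) x := by
  show (hpow f k) x = _
  rw [← hpow_toEquiv]
  rfl

lemma F_add (f : X ≃ₜ X) (j k : ℤ) (x : X) : F f (j + k) x = F f j (F f k x) := by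
  simp only [F_apply, zpow_add, Equiv.Perm.mul_apply]

lemma F_continuous (f : X ≃ₜ X) (k : ℤ) : Continuous (F f k) := (hpow f k).continuous

lemma F_symm (f : X ≃ₜ X) (k : ℤ) (x : X) : F f.symm k x = F f (-k) x := by
  have h : (f.symm.toEquiv : Equiv.Perm X) = (f.toEquiv : Equiv.Perm X)⁻¹ := rfl
  simp only [F_apply, h, inv_zpow, zpow_neg]

lemma Wu_eq (f : X ≃ₜ X) (c : ℝ) (x : X) : Wu f c x = Ws f.symm c x := by
  ext y
  simp only [Wu, Ws, Set.mem_setOf_eq]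
  constructor
  · intro h k hk
    rw [F_symm, F_symm]
    exact h (-k) (by omega)
  · intro h k hk
    have := h (-k) (by omega)
    rw [F_symm, F_symm, neg_neg] at this
    exact this

lemma key {X : Type*} [MetricSpace X] [CompactSpace X] (f : X ≃ₜ X) (c r : ℝ) (hr : 0 < r)
    (hexp : ∀ x : X, Ws f c x ∩ Wu f c x = {x}) :
    ∃ k : ℕ, ∀ x y : X, y ∈ Ws f c x → ∀ m : ℤ, (k : ℤ) ≤ m →
      dist (F f m y) (F f m x) ≤ r := by
  by_contra hcon
  push_neg at hcon
  choose x y hy m hm hd using hcon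
  obtain ⟨q, φ, hφ, hq⟩ := CompactSpace.tendsto_subseq
      (fun i : ℕ => ((F f (m i) (x i), F f (m i) (y i)) : X × X))
  have ha : Tendsto (fun i => F f (m (φ i)) (x (φ i))) atTop (𝓝 q.1) :=
    (continuous_fst.tendsto q).comp hq
  have hb : Tendsto (fun i => F f (m (φ i)) (y (φ i))) atTop (𝓝 q.2) :=
    (continuous_snd.tendsto q).comp hq
  have hmem : ∀ j : ℤ, dist (F f j q.2) (F f j q.1) ≤ c := by
    intro j
    have hT : Tendsto (fun i => dist (F f j (F f (m (φ i)) (y (φ i))))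
        (F f j (F f (m (φ i)) (x (φ i))))) atTop (𝓝 (dist (F f j q.2) (F f j q.1))) :=
      (((F_continuous f j).tendsto _).comp hb).dist (((F_continuous f j).tendsto _).comp ha)
    refine le_of_tendsto hT ?_
    filter_upwards [eventually_ge_atTop (-j).toNat] with i hi
    rw [← F_add, ← F_add]
    have h1 := hm (φ i)
    have h2 : i ≤ φ i := hφ.le_apply
    have h3 := Int.self_le_toNat (-j)
    exact hy (φ i) (j + m (φ i)) (by omega)
  have hq2 : q.2 ∈ Ws f c q.1 ∩ Wu f c q.1 := ⟨fun k _ => hmem k, fun k _ => hmem k⟩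
  rw [hexp q.1, Set.mem_singleton_iff] at hq2
  have hdist : Tendsto (fun i => dist (F f (m (φ i)) (y (φ i))) (F f (m (φ i)) (x (φ i))))
      atTop (𝓝 (dist q.2 q.1)) := hb.dist ha
  have hge : r ≤ dist q.2 q.1 :=
    ge_of_tendsto hdist (Eventually.of_forall fun i => (hd (φ i)).le)
  rw [hq2, dist_self] at hge
  linarith

end LS

/-- an expansive homeomorphism has uniform contractions on its local
stable/unstable sets. -/
theorem stmt_4 {X : Type*} [MetricSpace X] [CompactSpace X] (f : X ≃ₜ X)
    (hexp : ∃ c > (0:ℝ), ∀ x : X, LS.Ws f c x ∩ LS.Wu f c x = {x}) :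
    ∃ ε > (0:ℝ), ∀ r > (0:ℝ), ∃ k : ℕ, ∀ x : X, ∀ n : ℕ, k ≤ n →
      (LS.F f n '' LS.Ws f ε x ⊆ LS.Ws f r (LS.F f n x)) ∧
      (LS.F f (-(n:ℤ)) '' LS.Wu f ε x ⊆ LS.Wu f r (LS.F f (-(n:ℤ)) x)) := by
  obtain ⟨c, hc, hexp⟩ := hexp
  refine ⟨c, hc, fun r hr => ?_⟩
  obtain ⟨k1, hk1⟩ := LS.key f c r hr hexp
  have hexp' : ∀ x : X, LS.Ws f.symm c x ∩ LS.Wu f.symm c x = {x} := by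
    intro x
    rw [← LS.Wu_eq, Set.inter_comm]
    have : LS.Wu f.symm c x = LS.Ws f c x := by
      rw [LS.Wu_eq, Homeomorph.symm_symm]
    rw [this]
    exact hexp x
  obtain ⟨k2, hk2⟩ := LS.key f.symm c r hr hexp'
  refine ⟨max k1 k2, fun x n hn => ⟨?_, ?_⟩⟩
  · rintro _ ⟨y, hy, rfl⟩ j hj
    rw [← LS.F_add, ← LS.F_add]
    refine hk1 x y hy (j + (n : ℤ)) ?_
    have : k1 ≤ n := le_trans (le_max_left _ _) hn
    omega
  · rintro _ ⟨y, hy, rfl⟩ j hj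
    rw [← LS.F_add, ← LS.F_add]
    have hy' : y ∈ LS.Ws f.symm c x := by rwa [← LS.Wu_eq]
    have h2 : k2 ≤ n := le_trans (le_max_right _ _) hn
    have := hk2 x y hy' ((n : ℤ) - j) (by omega)
    rw [LS.F_symm, LS.F_symm] at this
    have e : j + -(n : ℤ) = -((n : ℤ) - j) := by ring
    rw [e]
    exact this
end
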